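/- arXiv:2002.05056 — 6 statements merged into one kernel-verified Lean document; each statement's English description precedes it below -/
import Mathlib

section
/- Let S be a finite set, D : S → [0,∞) with Σ_{x∈S} D(x) = 1, and h, c : S → {-1,1}; let ε̃ := Σ_{x : h(x) ≠ c(x)} D(x). Let 0 ≤ δ ≤ 1 and ε' ∈ (0, 2/3] satisfy |ε̃ - ε'| ≤ δ·ε', set α' := (1/2)·ln((1-ε')/ε'), and define D'(x) := D(x)·exp(-α'·c(x)·h(x)) / (2·(1+2δ)·√(ε'·(1-ε'))). Then 1 - 4δ ≤ Σ_{x∈S} D'(x) ≤ 1. -/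
/-!
Since `exp α' = √((1 - ε') / ε')`, the updated mass is `r / (1 + 2δ)` with
`r = (ε̃ (1 - ε') + (1 - ε̃) ε') / (2 ε' (1 - ε'))`. The numerator of `r` differs from its
denominator by `(ε̃ - ε') (1 - 2ε')`, and `|1 - 2ε'| ≤ 4 (1 - ε')` because `ε' ≤ 2/3`, so
`|r - 1| ≤ 2δ`. Finally `(1 - 2δ) / (1 + 2δ) ≥ 1 - 4δ`.
-/

open Finset Real

lemma exp_neg_mul_mul_of_sign (a : ℝ) {c h : ℝ} (hc : c = 1 ∨ c = -1) (hh : h = 1 ∨ h = -1) :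
    exp (-a * c * h) = if h ≠ c then exp a else exp (-a) := by
  rcases hc with rfl | rfl <;> rcases hh with rfl | rfl <;> norm_num

lemma sum_mul_exp_neg_mul_mul {ι : Type*} (S : Finset ι) (D h c : ι → ℝ)
    (hsum : ∑ x ∈ S, D x = 1) (hh : ∀ x ∈ S, h x = 1 ∨ h x = -1)
    (hc : ∀ x ∈ S, c x = 1 ∨ c x = -1) (a : ℝ) :
    ∑ x ∈ S, D x * exp (-a * c x * h x) =
      (∑ x ∈ S with h x ≠ c x, D x) * exp a
        + (1 - ∑ x ∈ S with h x ≠ c x, D x) * exp (-a) := by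
  have hcorrect : ∑ x ∈ S with ¬h x ≠ c x, D x = 1 - ∑ x ∈ S with h x ≠ c x, D x := by
    rw [← hsum, ← sum_filter_add_sum_filter_not S (fun x => h x ≠ c x) D]
    ring
  rw [← hcorrect, sum_mul, sum_mul, ← sum_filter_add_sum_filter_not S (fun x => h x ≠ c x)]
  congr 1 <;> refine sum_congr rfl fun x hx => ?_ <;> rw [mem_filter] at hx <;>
    rw [exp_neg_mul_mul_of_sign a (hc x hx.1) (hh x hx.1)]
  exacts [by rw [if_pos hx.2], by rw [if_neg hx.2]]

lemma exp_half_log_odds_mul_sqrt {ε : ℝ} (h0 : 0 < ε) (h1 : ε < 1) :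
    exp (1 / 2 * log ((1 - ε) / ε)) * √(ε * (1 - ε)) = 1 - ε ∧
      exp (-(1 / 2 * log ((1 - ε) / ε))) * √(ε * (1 - ε)) = ε := by
  have hodds : exp (1 / 2 * log ((1 - ε) / ε)) = √((1 - ε) / ε) := by
    rw [one_div_mul_eq_div, exp_half, exp_log (div_pos (by linarith) h0)]
  rw [exp_neg, hodds, ← sqrt_mul (div_pos (by linarith) h0).le, ← sqrt_inv,
    ← sqrt_mul (inv_nonneg.2 (div_pos (by linarith) h0).le), inv_div]
  constructor
  · rw [show (1 - ε) / ε * (ε * (1 - ε)) = (1 - ε) ^ 2 by field_simp, sqrt_sq (by linarith)]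
  · rw [show ε / (1 - ε) * (ε * (1 - ε)) = ε ^ 2 by field_simp [sub_ne_zero.2 h1.ne'],
      sqrt_sq h0.le]

lemma add_mul_exp_half_log_odds_div {ε : ℝ} (h0 : 0 < ε) (h1 : ε < 1) (e K : ℝ) :
    (e * exp (1 / 2 * log ((1 - ε) / ε)) + (1 - e) * exp (-(1 / 2 * log ((1 - ε) / ε))))
        / (K * √(ε * (1 - ε)))
      = (e * (1 - ε) + (1 - e) * ε) / (K * (ε * (1 - ε))) := by
  obtain ⟨hexp, hexp_neg⟩ := exp_half_log_odds_mul_sqrt h0 h1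
  have hs : √(ε * (1 - ε)) ≠ 0 := (sqrt_pos.2 (by nlinarith)).ne'
  calc _ = (e * (exp (1 / 2 * log ((1 - ε) / ε)) * √(ε * (1 - ε)))
            + (1 - e) * (exp (-(1 / 2 * log ((1 - ε) / ε))) * √(ε * (1 - ε))))
          / (K * (√(ε * (1 - ε)) * √(ε * (1 - ε)))) := by field_simp
    _ = _ := by rw [hexp, hexp_neg, mul_self_sqrt (by nlinarith)]

lemma abs_div_two_mul_sub_one_le {e ε δ : ℝ} (h0 : 0 < ε) (h1 : ε ≤ 2 / 3)
    (h : |e - ε| ≤ δ * ε) :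
    |(e * (1 - ε) + (1 - e) * ε) / (2 * (ε * (1 - ε))) - 1| ≤ 2 * δ := by
  have hP : 0 < 2 * (ε * (1 - ε)) := by nlinarith
  have hsign : |1 - 2 * ε| ≤ 4 * (1 - ε) := abs_le.2 ⟨by linarith, by linarith⟩
  rw [div_sub_one hP.ne', abs_div, abs_of_pos hP, div_le_iff₀ hP]
  calc |e * (1 - ε) + (1 - e) * ε - 2 * (ε * (1 - ε))|
      = |e - ε| * |1 - 2 * ε| := by rw [← abs_mul]; ring_nf
    _ ≤ δ * ε * (4 * (1 - ε)) := mul_le_mul h hsign (abs_nonneg _) ((abs_nonneg _).trans h)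
    _ = 2 * δ * (2 * (ε * (1 - ε))) := by ring

lemma div_one_add_two_mul_mem_Icc {r δ : ℝ} (hδ : 0 ≤ δ) (h : |r - 1| ≤ 2 * δ) :
    1 - 4 * δ ≤ r / (1 + 2 * δ) ∧ r / (1 + 2 * δ) ≤ 1 := by
  obtain ⟨hlo, hhi⟩ := abs_le.1 h
  have hpos : 0 < 1 + 2 * δ := by linarith
  rw [le_div_iff₀ hpos, div_le_one hpos]
  constructor <;> nlinarith

theorem yes_instance_mass_general {α : Type*} (S : Finset α) (D h c : α → ℝ)
    (hsum : ∑ x ∈ S, D x = 1)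
    (hh : ∀ x ∈ S, h x = 1 ∨ h x = -1) (hc : ∀ x ∈ S, c x = 1 ∨ c x = -1)
    (δ ε' : ℝ) (hδ0 : 0 ≤ δ) (hε'0 : 0 < ε') (hε'1 : ε' ≤ 2 / 3)
    (happ : |(∑ x ∈ S.filter (fun x => h x ≠ c x), D x) - ε'| ≤ δ * ε')
    (α' : ℝ) (hα' : α' = (1 / 2) * Real.log ((1 - ε') / ε'))
    (D' : α → ℝ)
    (hD' : ∀ x ∈ S, D' x =
      D x * Real.exp (-α' * c x * h x)
        / (2 * (1 + 2 * δ) * Real.sqrt (ε' * (1 - ε')))) :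
    1 - 4 * δ ≤ ∑ x ∈ S, D' x ∧ ∑ x ∈ S, D' x ≤ 1 := by
  subst hα'
  rw [sum_congr rfl hD', ← sum_div, sum_mul_exp_neg_mul_mul S D h c hsum hh hc,
    add_mul_exp_half_log_odds_div hε'0 (by linarith), mul_right_comm, ← div_div]
  exact div_one_add_two_mul_mem_Icc hδ0 (abs_div_two_mul_sub_one_le hε'0 hε'1 happ)

/-- 'Yes'-instance normalization claim: the modified AdaBoost distribution
    update with approximate normalizer 2(1+2δ)√(ε'(1-ε')) has total mass in
    [1-4δ, 1]. -/
theorem yes_instance_mass {α : Type*} (S : Finset α) (D h c : α → ℝ)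
    (hD : ∀ x ∈ S, 0 ≤ D x) (hsum : ∑ x ∈ S, D x = 1)
    (hh : ∀ x ∈ S, h x = 1 ∨ h x = -1) (hc : ∀ x ∈ S, c x = 1 ∨ c x = -1)
    (δ ε' : ℝ) (hδ0 : 0 ≤ δ) (hδ1 : δ ≤ 1) (hε'0 : 0 < ε') (hε'1 : ε' ≤ 2 / 3)
    (happ : |(∑ x ∈ S.filter (fun x => h x ≠ c x), D x) - ε'| ≤ δ * ε')
    (α' : ℝ) (hα' : α' = (1 / 2) * Real.log ((1 - ε') / ε'))
    (D' : α → ℝ)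
    (hD' : ∀ x ∈ S, D' x =
      D x * Real.exp (-α' * c x * h x)
        / (2 * (1 + 2 * δ) * Real.sqrt (ε' * (1 - ε')))) :
    1 - 4 * δ ≤ ∑ x ∈ S, D' x ∧ ∑ x ∈ S, D' x ≤ 1 :=
  yes_instance_mass_general S D h c hsum hh hc δ ε' hδ0 hε'0 hε'1 happ α' hα' D' hD'
end

section
/- Let S be a finite set, D : S → [0,∞) with Σ_{x∈S} D(x) = 1, and h, c : S → {-1,1}; let ε̃ := Σ_{x : h(x) ≠ c(x)} D(x). Let q ≥ 2 be a real with 0 ≤ ε̃ ≤ 1/q, set ε' := 1/q, α' := (1/2)·ln(q-1), Z' := 2·(1+2/q)·√((1/q)·(1-1/q)), and define D'(x) := D(x)·(2-1/q)·exp(-α')/Z' if h(x) = c(x) and D'(x) := D(x)·(1/q)·exp(α')/Z' if h(x) ≠ c(x). Then 1 - 3/q ≤ Σ_{x∈S} D'(x) ≤ 1. -/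
/-!
With `s = √(q - 1)` we have `exp α' = s`, `√((1/q)(1 - 1/q)) = s / q`, so the square roots cancel
and a correctly classified point gets weight `q(2q - 1) / (2(q + 2)(q - 1))`, a misclassified one
weight `q / (2(q + 2))`. If `ε` is the misclassified mass, the total mass is therefore
`q(2q - 1 - εq) / (2(q + 2)(q - 1))`, which decreases in `ε`: at `ε = 0` it is at most `1`
since `q ≥ 4/3`, and at `ε = 1/q` it equals `q / (q + 2) ≥ 1 - 3/q`.
-/

open Finset Real

theorem Real.exp_half_mul_log {t : ℝ} (ht : 0 < t) : exp (1 / 2 * log t) = √t := by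
  rw [sqrt_eq_rpow, rpow_def_of_pos ht, mul_comm]

theorem Finset.sum_eq_of_forall_eq_ite_mul {α : Type*} (S : Finset α) (p : α → Prop)
    [DecidablePred p] (D D' : α → ℝ) (a b : ℝ)
    (hD' : ∀ x ∈ S, D' x = if p x then D x * a else D x * b) :
    ∑ x ∈ S, D' x = (∑ x ∈ S.filter p, D x) * a + (∑ x ∈ S.filter (¬ p ·), D x) * b := by
  rw [sum_congr rfl hD', sum_ite, sum_mul, sum_mul]

section Weights

variable {q : ℝ} (hq : 1 < q)
include hq

theorem sqrt_inv_mul_one_sub_inv : √(1 / q * (1 - 1 / q)) = √(q - 1) / q := by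
  have hq0 : 0 < q := by linarith
  rw [show 1 / q * (1 - 1 / q) = (q - 1) / q ^ 2 by field_simp, sqrt_div' _ (sq_nonneg q),
    sqrt_sq hq0.le]

theorem correct_weight_eq :
    (2 - 1 / q) * exp (-(1 / 2 * log (q - 1))) / (2 * (1 + 2 / q) * √(1 / q * (1 - 1 / q))) =
      q * (2 * q - 1) / (2 * (q + 2) * (q - 1)) := by
  rw [exp_neg, exp_half_mul_log (by linarith), sqrt_inv_mul_one_sub_inv hq]
  have hss : √(q - 1) ^ 2 = q - 1 := sq_sqrt (by linarith)
  have hs : 0 < √(q - 1) := sqrt_pos.mpr (by linarith)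
  set s := √(q - 1)
  rw [← hss]
  field_simp

theorem misclassified_weight_eq :
    1 / q * exp (1 / 2 * log (q - 1)) / (2 * (1 + 2 / q) * √(1 / q * (1 - 1 / q))) =
      q / (2 * (q + 2)) := by
  have hs : 0 < √(q - 1) := sqrt_pos.mpr (by linarith)
  rw [exp_half_mul_log (by linarith), sqrt_inv_mul_one_sub_inv hq]
  field_simp

end Weights

theorem updated_mass_bounds {q ε : ℝ} (hq : 2 ≤ q) (hε0 : 0 ≤ ε) (hεq : ε ≤ 1 / q) :
    1 - 3 / q ≤ (1 - ε) * (q * (2 * q - 1) / (2 * (q + 2) * (q - 1))) + ε * (q / (2 * (q + 2))) ∧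
      (1 - ε) * (q * (2 * q - 1) / (2 * (q + 2) * (q - 1))) + ε * (q / (2 * (q + 2))) ≤ 1 := by
  have hq0 : 0 < q := by linarith
  have hq1 : 0 < q - 1 := by linarith
  have hmass : (1 - ε) * (q * (2 * q - 1) / (2 * (q + 2) * (q - 1))) + ε * (q / (2 * (q + 2))) =
      q * (2 * q - 1 - ε * q) / (2 * (q + 2) * (q - 1)) := by
    field_simp
    ring
  have hεq' : ε * q ≤ 1 := by rwa [le_div_iff₀ hq0] at hεq
  have hlower : 1 - 3 / q = (q - 3) / q := by field_simp
  rw [hmass]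
  constructor
  · rw [hlower, le_div_iff₀ (by positivity), div_mul_eq_mul_div, div_le_iff₀ hq0]
    nlinarith [mul_nonneg (mul_nonneg hq0.le hq0.le) (by linarith : (0 : ℝ) ≤ 1 - ε * q)]
  · rw [div_le_one (by positivity)]
    nlinarith [mul_nonneg hε0 hq0.le]

theorem no_instance_mass_general {α : Type*} (S : Finset α) (D h c : α → ℝ)
    (hD : ∀ x ∈ S, 0 ≤ D x) (hsum : ∑ x ∈ S, D x = 1)
    (q : ℝ) (hq : 2 ≤ q)
    (hεt : (∑ x ∈ S.filter (fun x => h x ≠ c x), D x) ≤ 1 / q)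
    (α' Z' : ℝ) (hα' : α' = (1 / 2) * Real.log (q - 1))
    (hZ' : Z' = 2 * (1 + 2 / q) * Real.sqrt ((1 / q) * (1 - 1 / q)))
    (D' : α → ℝ)
    (hD' : ∀ x ∈ S, D' x =
      if h x = c x then D x * (2 - 1 / q) * Real.exp (-α') / Z'
      else D x * (1 / q) * Real.exp α' / Z') :
    1 - 3 / q ≤ ∑ x ∈ S, D' x ∧ ∑ x ∈ S, D' x ≤ 1 := by
  set ε := ∑ x ∈ S.filter (fun x => h x ≠ c x), D x
  have hε0 : 0 ≤ ε := sum_nonneg fun x hx => hD x (mem_filter.mp hx).1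
  have hcorrect : ∑ x ∈ S.filter (fun x => h x = c x), D x = 1 - ε := by
    rw [← hsum, ← sum_filter_add_sum_filter_not S (fun x => h x = c x) D]
    ring
  have hD'_weights : ∀ x ∈ S, D' x = if h x = c x
      then D x * (q * (2 * q - 1) / (2 * (q + 2) * (q - 1)))
      else D x * (q / (2 * (q + 2))) := by
    intro x hx
    rw [hD' x hx, ← correct_weight_eq (by linarith), ← misclassified_weight_eq (by linarith),
      ← hα', ← hZ']
    split_ifs <;> ring
  rw [sum_eq_of_forall_eq_ite_mul S _ D D' _ _ hD'_weights, hcorrect]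
  exact updated_mass_bounds hq hε0 hεt

/-- 'No'-instance normalization claim: the non-standard distribution update,
    used when the weighted error is at most 1/q, has total mass in
    [1 - 3/q, 1]. -/
theorem no_instance_mass {α : Type*} (S : Finset α) (D h c : α → ℝ)
    (hD : ∀ x ∈ S, 0 ≤ D x) (hsum : ∑ x ∈ S, D x = 1)
    (hh : ∀ x ∈ S, h x = 1 ∨ h x = -1) (hc : ∀ x ∈ S, c x = 1 ∨ c x = -1)
    (q : ℝ) (hq : 2 ≤ q)
    (hεt : (∑ x ∈ S.filter (fun x => h x ≠ c x), D x) ≤ 1 / q)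
    (α' Z' : ℝ) (hα' : α' = (1 / 2) * Real.log (q - 1))
    (hZ' : Z' = 2 * (1 + 2 / q) * Real.sqrt ((1 / q) * (1 - 1 / q)))
    (D' : α → ℝ)
    (hD' : ∀ x ∈ S, D' x =
      if h x = c x then D x * (2 - 1 / q) * Real.exp (-α') / Z'
      else D x * (1 / q) * Real.exp α' / Z') :
    1 - 3 / q ≤ ∑ x ∈ S, D' x ∧ ∑ x ∈ S, D' x ≤ 1 :=
  no_instance_mass_general S D h c hD hsum q hq hεt α' Z' hα' hZ' D' hD'
end

section
/- Let S be a finite set, D : S → [0,∞) with Σ_{x∈S} D(x) = 1, and h, c : S → {-1,1}; let ε̃ := Σ_{x : h(x) ≠ c(x)} D(x). Let 0 ≤ δ ≤ 1 and ε' ∈ (0, 2/3] satisfy |ε̃ - ε'| ≤ δ·ε', and set α' := (1/2)·ln((1-ε')/ε'). Define D'(x) := D(x)·exp(-α'·c(x)·h(x)) / (2·(1+2δ)·√(ε'·(1-ε'))) and D*(x) := D(x)·exp(-α'·c(x)·h(x)) / ((1-ε̃)·exp(-α') + ε̃·exp(α')). Then Σ_{x∈S} |D'(x) - D*(x)| ≤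 4δ. -/
/-!
Write `p = e^{-α'} = √(ε'/(1-ε'))` and `q = e^{α'} = 1/p`. Since `c x h x = ±1`, every weight
`D x · e^{-α' c x h x}` is `D x · p` or `D x · q`, so the exact normalizer is
`Z = (1-ε̃) p + ε̃ q = √(ε'(1-ε')) · r` with `r = (1-ε̃)/(1-ε') + ε̃/ε'`, and the ℓ¹ distance between
the two rescalings of the same weights is `|Z/W - 1|`, `W` being the approximate normalizer.
Now `r - 2 = (ε̃ - ε')(1 - 2ε')/(ε'(1-ε'))`, and `|1 - 2ε'| ≤ 1 - ε'` for `ε' ≤ 2/3`, so `|r - 2| ≤ δ`.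
-/

open Real Finset

lemma exp_neg_mul_mul_eq_ite {a c h : ℝ} (hc : c = 1 ∨ c = -1) (hh : h = 1 ∨ h = -1) :
    exp (-a * c * h) = if h = c then exp (-a) else exp a := by
  rcases hc with rfl | rfl <;> rcases hh with rfl | rfl <;> norm_num

lemma sum_mul_ite_eq_of_sum_eq_one {α : Type*} (S : Finset α) (D : α → ℝ) (P : α → Prop)
    [DecidablePred P] (hsum : ∑ x ∈ S, D x = 1) (u v : ℝ) :
    ∑ x ∈ S, D x * (if P x then u else v) =
      (1 - ∑ x ∈ S.filter (fun x => ¬ P x), D x) * u + (∑ x ∈ S.filter (fun x => ¬ P x), D x) * v := by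
  have hsplit := sum_filter_add_sum_filter_not S P D
  simp only [mul_ite, sum_ite, ← sum_mul]
  rw [hsum] at hsplit
  rw [← hsplit, add_sub_cancel_right]

lemma sum_abs_div_sub_div_sum {α : Type*} (S : Finset α) (w : α → ℝ) (hw : ∀ x ∈ S, 0 ≤ w x)
    (W : ℝ) (hZ : ∑ x ∈ S, w x ≠ 0) :
    ∑ x ∈ S, |w x / W - w x / ∑ y ∈ S, w y| = |(∑ x ∈ S, w x) / W - 1| := by
  set Z := ∑ y ∈ S, w y
  have hZ0 : 0 ≤ Z := sum_nonneg hw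
  calc ∑ x ∈ S, |w x / W - w x / Z| = ∑ x ∈ S, w x * |W⁻¹ - Z⁻¹| := by
        refine sum_congr rfl fun x hx => ?_
        rw [div_eq_mul_inv, div_eq_mul_inv, ← mul_sub, abs_mul, abs_of_nonneg (hw x hx)]
    _ = |Z * (W⁻¹ - Z⁻¹)| := by rw [← sum_mul, abs_mul, abs_of_nonneg hZ0]
    _ = |Z / W - 1| := by rw [mul_sub, mul_inv_cancel₀ hZ, div_eq_mul_inv]

lemma exp_half_log_div {e : ℝ} (he0 : 0 < e) (he1 : e < 1) :
    exp ((1 / 2) * log ((1 - e) / e)) = √(1 - e) / √e := by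
  rw [← sqrt_div' _ he0.le, sqrt_eq_rpow, rpow_def_of_pos (div_pos (by linarith) he0), mul_comm]

lemma mixture_exp_div_eq {e t δ α' : ℝ} (he0 : 0 < e) (he1 : e < 1)
    (hα' : α' = (1 / 2) * log ((1 - e) / e)) :
    ((1 - t) * exp (-α') + t * exp α') / (2 * (1 + 2 * δ) * √(e * (1 - e))) =
      ((1 - t) / (1 - e) + t / e) / (2 * (1 + 2 * δ)) := by
  have hu : 0 < √e := sqrt_pos.mpr he0
  have hv : 0 < √(1 - e) := sqrt_pos.mpr (by linarith)
  have hu2 : √e ^ 2 = e := sq_sqrt he0.le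
  have hv2 : √(1 - e) ^ 2 = 1 - e := sq_sqrt (by linarith)
  have h1e : 1 - e ≠ 0 := by linarith
  rw [exp_neg, hα', exp_half_log_div he0 he1, sqrt_mul he0.le, inv_div]
  field_simp
  rw [hu2, hv2]

lemma abs_mixture_ratio_sub_two_le {e t δ : ℝ} (he0 : 0 < e) (he1 : e ≤ 2 / 3)
    (ht : |t - e| ≤ δ * e) :
    |(1 - t) / (1 - e) + t / e - 2| ≤ δ := by
  have h1e : 0 < 1 - e := by linarith
  have hform : (1 - t) / (1 - e) + t / e - 2 = (t - e) / e * ((1 - 2 * e) / (1 - e)) := by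
    field_simp
    ring
  have hfirst : |(t - e) / e| ≤ δ := by
    rwa [abs_div, abs_of_pos he0, div_le_iff₀ he0]
  have hsecond : |(1 - 2 * e) / (1 - e)| ≤ 1 := by
    rw [abs_div, abs_of_pos h1e, div_le_one h1e, abs_le]
    constructor <;> linarith
  rw [hform, abs_mul]
  calc |(t - e) / e| * |(1 - 2 * e) / (1 - e)| ≤ δ * 1 :=
        mul_le_mul hfirst hsecond (abs_nonneg _) ((abs_nonneg _).trans hfirst)
    _ = δ := mul_one δ

lemma abs_div_two_mul_sub_one_le_s6 {r δ : ℝ} (hδ : 0 ≤ δ) (hr : |r - 2| ≤ δ) :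
    |r / (2 * (1 + 2 * δ)) - 1| ≤ 4 * δ := by
  have hpos : 0 < 2 * (1 + 2 * δ) := by positivity
  rw [div_sub_one hpos.ne', abs_div, abs_of_pos hpos, div_le_iff₀ hpos]
  have := abs_le.mp hr
  rw [abs_le]
  constructor <;> nlinarith

/-- ℓ¹ distance between the approximately normalized ('yes'-instance)
    distribution update D' and the exactly normalized update D* is at most 4δ. -/
theorem yes_instance_l1 {α : Type*} (S : Finset α) (D h c : α → ℝ)
    (hD : ∀ x ∈ S, 0 ≤ D x) (hsum : ∑ x ∈ S, D x = 1)
    (hh : ∀ x ∈ S, h x = 1 ∨ h x = -1) (hc : ∀ x ∈ S, c x = 1 ∨ c x = -1)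
    (δ ε' εt : ℝ) (hεt : εt = ∑ x ∈ S.filter (fun x => h x ≠ c x), D x)
    (hδ0 : 0 ≤ δ) (hδ1 : δ ≤ 1) (hε'0 : 0 < ε') (hε'1 : ε' ≤ 2 / 3)
    (happ : |εt - ε'| ≤ δ * ε')
    (α' : ℝ) (hα' : α' = (1 / 2) * Real.log ((1 - ε') / ε'))
    (D' Dstar : α → ℝ)
    (hD' : ∀ x ∈ S, D' x =
      D x * Real.exp (-α' * c x * h x)
        / (2 * (1 + 2 * δ) * Real.sqrt (ε' * (1 - ε'))))
    (hDstar : ∀ x ∈ S, Dstar x =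
      D x * Real.exp (-α' * c x * h x)
        / ((1 - εt) * Real.exp (-α') + εt * Real.exp α')) :
    ∑ x ∈ S, |D' x - Dstar x| ≤ 4 * δ := by
  set w := fun x => D x * exp (-α' * c x * h x)
  set W := 2 * (1 + 2 * δ) * √(ε' * (1 - ε'))
  have hZ : ∑ x ∈ S, w x = (1 - εt) * exp (-α') + εt * exp α' := by
    rw [hεt, ← sum_mul_ite_eq_of_sum_eq_one S D (fun x => h x = c x) hsum]
    exact sum_congr rfl fun x hx => by simp only [w, exp_neg_mul_mul_eq_ite (hc x hx) (hh x hx)]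
  have hratio : (∑ x ∈ S, w x) / W = ((1 - εt) / (1 - ε') + εt / ε') / (2 * (1 + 2 * δ)) := by
    rw [hZ]
    exact mixture_exp_div_eq hε'0 (by linarith) hα'
  have hr := abs_mixture_ratio_sub_two_le hε'0 hε'1 happ
  have hZ0 : ∑ x ∈ S, w x ≠ 0 := by
    have hr_lower := (abs_le.mp hr).1
    have hpos : 0 < (∑ x ∈ S, w x) / W := hratio ▸ div_pos (by linarith) (by positivity)
    exact fun h0 => by simp [h0] at hpos
  calc ∑ x ∈ S, |D' x - Dstar x| = ∑ x ∈ S, |w x / W - w x / ∑ y ∈ S, w y| :=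
        sum_congr rfl fun x hx => by rw [hD' x hx, hDstar x hx, hZ]
    _ = |(∑ x ∈ S, w x) / W - 1| :=
        sum_abs_div_sub_div_sum S w (fun x hx => mul_nonneg (hD x hx) (exp_pos _).le) W hZ0
    _ ≤ 4 * δ := hratio ▸ abs_div_two_mul_sub_one_le_s6 hδ0 hr
end

section
/- Let S be a finite nonempty set of size M, let D¹(x) := 1/M for all x ∈ S, let c : S → {-1,1}, and for t = 1,…,T let h_t : S → {-1,1}, α_t ∈ ℝ, and Z_t > 0, with distributions defined recursively by D^{t+1}(x) := D^t(x)·exp(-α_t·c(x)·h_t(x)) / Z_t. If Σ_{x∈S} D^{T+1}(x) ≤ 1, then (1/M)·|{x ∈ S : c(x)·Σ_{t=1}^T α_t·h_t(x) ≤ 0}| ≤ Π_{t=1}^T Z_t. -/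
/-! Unrolling the update gives `D^{T+1}(x) = exp(-m(x)) / (M ∏ Z_t)` with margin
`m(x) = c(x) Σ_t α_t h_t(x)`. Since `1[m ≤ 0] ≤ exp(-m)`, the number of points with
nonpositive margin is at most `Σ_x exp(-m(x)) = M ∏ Z_t Σ_x D^{T+1}(x) ≤ M ∏ Z_t`. -/

open Finset Real

theorem eq_mul_prod_Icc_of_succ_eq_mul {M : Type*} [CommMonoid M] {d g : ℕ → M} {n : ℕ}
    (hd : ∀ t ∈ Icc 1 n, d (t + 1) = d t * g t) :
    d (n + 1) = d 1 * ∏ t ∈ Icc 1 n, g t := by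
  induction n with
  | zero => simp
  | succ n ih =>
    have hprev : ∀ t ∈ Icc 1 n, d (t + 1) = d t * g t := fun t ht =>
      hd t (Icc_subset_Icc_right n.le_succ ht)
    rw [hd (n + 1) (by simp), ih hprev, prod_Icc_succ_top (by omega), mul_assoc]

theorem card_filter_nonpos_le_sum_exp_neg {α : Type*} (S : Finset α) (m : α → ℝ) :
    (#(S.filter fun x => m x ≤ 0) : ℝ) ≤ ∑ x ∈ S, exp (-m x) := by
  rw [natCast_card_filter]
  refine sum_le_sum fun x _ => ?_
  split_ifs with hm
  · exact one_le_exp (by linarith)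
  · exact (exp_pos _).le

theorem adaboost_training_error_general {α : Type*} (S : Finset α)
    (T : ℕ) (c : α → ℝ)
    (h : ℕ → α → ℝ)
    (a Z : ℕ → ℝ) (hZ : ∀ t ∈ Finset.Icc 1 T, 0 < Z t)
    (D : ℕ → α → ℝ)
    (hD1 : ∀ x ∈ S, D 1 x = 1 / (S.card : ℝ))
    (hrec : ∀ t ∈ Finset.Icc 1 T, ∀ x ∈ S,
      D (t + 1) x = D t x * Real.exp (-(a t) * c x * h t x) / Z t)
    (hsub : ∑ x ∈ S, D (T + 1) x ≤ 1) :
    (1 / (S.card : ℝ)) *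
        ((S.filter (fun x => c x * ∑ t ∈ Finset.Icc 1 T, a t * h t x ≤ 0)).card : ℝ)
      ≤ ∏ t ∈ Finset.Icc 1 T, Z t := by
  set P := ∏ t ∈ Icc 1 T, Z t
  set margin := fun x => c x * ∑ t ∈ Icc 1 T, a t * h t x
  have hP : 0 < P := prod_pos hZ
  have hclosed : ∀ x ∈ S, D (T + 1) x = 1 / #S / P * exp (-margin x) := by
    intro x hx
    have hexp : ∑ t ∈ Icc 1 T, -a t * c x * h t x = -margin x := by
      simp only [margin, mul_sum, ← sum_neg_distrib]
      exact sum_congr rfl fun t _ => by ring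
    rw [eq_mul_prod_Icc_of_succ_eq_mul (d := (D · x)) fun t ht =>
        (hrec t ht x hx).trans (mul_div_assoc ..),
      prod_div_distrib, ← exp_sum, hexp, hD1 x hx]
    ring
  calc 1 / #S * (#(S.filter fun x => margin x ≤ 0) : ℝ)
      = P * (1 / #S / P * #(S.filter fun x => margin x ≤ 0)) := by field_simp
    _ ≤ P * (1 / #S / P * ∑ x ∈ S, exp (-margin x)) := by
      gcongr
      exact card_filter_nonpos_le_sum_exp_neg S margin
    _ = P * ∑ x ∈ S, D (T + 1) x := by rw [mul_sum, sum_congr rfl hclosed]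
    _ ≤ P := mul_le_of_le_one_right hP.le hsub

/-- AdaBoost training-error bound: unrolling the recursive exponential
    distribution update, the fraction of training points on which the
    combined hypothesis has nonpositive margin is at most the product of the
    normalization factors. -/
theorem adaboost_training_error {α : Type*} (S : Finset α) (hS : S.Nonempty)
    (T : ℕ) (c : α → ℝ) (hc : ∀ x ∈ S, c x = 1 ∨ c x = -1)
    (h : ℕ → α → ℝ)
    (hh : ∀ t ∈ Finset.Icc 1 T, ∀ x ∈ S, h t x = 1 ∨ h t x = -1)
    (a Z : ℕ → ℝ) (hZ : ∀ t ∈ Finset.Icc 1 T, 0 < Z t)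
    (D : ℕ → α → ℝ)
    (hD1 : ∀ x ∈ S, D 1 x = 1 / (S.card : ℝ))
    (hrec : ∀ t ∈ Finset.Icc 1 T, ∀ x ∈ S,
      D (t + 1) x = D t x * Real.exp (-(a t) * c x * h t x) / Z t)
    (hsub : ∑ x ∈ S, D (T + 1) x ≤ 1) :
    (1 / (S.card : ℝ)) *
        ((S.filter (fun x => c x * ∑ t ∈ Finset.Icc 1 T, a t * h t x ≤ 0)).card : ℝ)
      ≤ ∏ t ∈ Finset.Icc 1 T, Z t :=
  adaboost_training_error_general S T c h a Z hZ D hD1 hrec hsub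
end

section
/- Let 0 ≤ δ ≤ 1/10 and 0 < γ ≤ 1/2. Let ε, ε̃, ε' be reals with 0 ≤ ε ≤ 1/2 - γ, |ε̃ - ε| ≤ 4δ, ε' > 0, and |ε̃ - ε'| ≤ δ·ε'. Then 2·√(ε'·(1-ε')) ≤ √(1 - 4·γ² + 300·δ). -/
/-! Chaining the two error bounds gives `ε'(1 - δ) ≤ ε̃ ≤ 1/2 - γ + 4δ`, hence `ε' ≤ 1/2 - γ + 5δ`.
Since `1 - 4γ² = 4a(1 - a)` for `a = 1/2 - γ`, and `x(1 - x)` grows by at most `(1 - 2a)d = 2γd`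
when `x` passes `a ≤ 1/2` by `d`, the quantity `4ε'(1 - ε')` exceeds `1 - 4γ²` by at most
`40γδ ≤ 20δ`. -/

lemma mul_one_sub_le_of_le_add {a x d : ℝ} (ha : a ≤ 1 / 2) (hd : 0 ≤ d) (hx : x ≤ a + d) :
    x * (1 - x) ≤ a * (1 - a) + (1 - 2 * a) * d := by
  rcases le_or_gt x a with hxa | hax
  · nlinarith [mul_nonneg (sub_nonneg.2 hxa) (by linarith : (0 : ℝ) ≤ 1 - a - x)]
  · nlinarith [mul_le_mul_of_nonneg_right (sub_le_iff_le_add'.2 hx)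
      (by linarith : (0 : ℝ) ≤ 1 - 2 * a)]

lemma le_add_five_mul_of_mul_one_sub_le {a x δ : ℝ} (hδ0 : 0 ≤ δ) (hδ1 : δ ≤ 1 / 10)
    (ha : a ≤ 1 / 2) (hx : x * (1 - δ) ≤ a + 4 * δ) : x ≤ a + 5 * δ := by
  have hslack : a + 4 * δ ≤ (a + 5 * δ) * (1 - δ) := by nlinarith
  exact le_of_mul_le_mul_right (hx.trans hslack) (by linarith)

theorem per_round_normalizer_bound_general (δ γ ε εt ε' : ℝ)
    (hδ0 : 0 ≤ δ) (hδ1 : δ ≤ 1 / 10) (hγ0 : 0 < γ) (hγ1 : γ ≤ 1 / 2)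
    (hε1 : ε ≤ 1 / 2 - γ)
    (h1 : |εt - ε| ≤ 4 * δ) (h2 : |εt - ε'| ≤ δ * ε') :
    2 * Real.sqrt (ε' * (1 - ε')) ≤ Real.sqrt (1 - 4 * γ ^ 2 + 300 * δ) := by
  rw [abs_le] at h1 h2
  have hε' : ε' ≤ (1 / 2 - γ) + 5 * δ :=
    le_add_five_mul_of_mul_one_sub_le hδ0 hδ1 (by linarith) (by linarith)
  have hquad := mul_one_sub_le_of_le_add (by linarith) (by positivity) hε'
  have hγδ : γ * δ ≤ 1 / 2 * δ := mul_le_mul_of_nonneg_right hγ1 hδ0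
  calc 2 * Real.sqrt (ε' * (1 - ε')) = Real.sqrt (4 * (ε' * (1 - ε'))) := by
        rw [Real.sqrt_mul (by norm_num : (0 : ℝ) ≤ 4), show Real.sqrt 4 = 2 by norm_num]
    _ ≤ Real.sqrt (1 - 4 * γ ^ 2 + 300 * δ) := Real.sqrt_le_sqrt (by nlinarith)

/-- Per-round bound on the approximate normalization factor 2√(ε'(1-ε')). -/
theorem per_round_normalizer_bound (δ γ ε εt ε' : ℝ)
    (hδ0 : 0 ≤ δ) (hδ1 : δ ≤ 1 / 10) (hγ0 : 0 < γ) (hγ1 : γ ≤ 1 / 2)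
    (hε0 : 0 ≤ ε) (hε1 : ε ≤ 1 / 2 - γ)
    (h1 : |εt - ε| ≤ 4 * δ) (hε'0 : 0 < ε') (h2 : |εt - ε'| ≤ δ * ε') :
    2 * Real.sqrt (ε' * (1 - ε')) ≤ Real.sqrt (1 - 4 * γ ^ 2 + 300 * δ) :=
  per_round_normalizer_bound_general δ γ ε εt ε' hδ0 hδ1 hγ0 hγ1 hε1 h1 h2
end

section
/- Let Q ≥ 1 and T ≥ 1 be integers, let δ := 1/(10·Q·T²), and let 0 < γ ≤ 1/2. Then ((1+2δ)·√(1 - 4·γ² + 300·δ))^T ≤ exp(-2·T·γ² + 16/(Q·T)). -/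
/-!
Each factor is bounded by an exponential: `1 + 2δ ≤ exp (2δ)` and, since `x ≤ exp (x - 1)`,
`√x ≤ exp ((x - 1) / 2)`, so one round contributes at most `exp (-2γ² + 152δ)`. Over `T` rounds the
error term is `152 T δ = 15.2 / (Q T) ≤ 16 / (Q T)`.
-/

open Real

theorem Real.sqrt_le_exp_half_sub_one (x : ℝ) : √x ≤ exp ((x - 1) / 2) := by
  have hsq : exp ((x - 1) / 2) ^ 2 = exp (x - 1) := by
    rw [← exp_nat_mul]; ring_nf
  calc √x ≤ √(exp ((x - 1) / 2) ^ 2) := by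
        gcongr; linarith [hsq, add_one_le_exp (x - 1)]
    _ = exp ((x - 1) / 2) := sqrt_sq (exp_nonneg _)

theorem normalizer_le_exp (γ δ : ℝ) :
    (1 + 2 * δ) * √(1 - 4 * γ ^ 2 + 300 * δ) ≤ exp (-2 * γ ^ 2 + 152 * δ) :=
  calc (1 + 2 * δ) * √(1 - 4 * γ ^ 2 + 300 * δ)
      ≤ exp (2 * δ) * exp ((1 - 4 * γ ^ 2 + 300 * δ - 1) / 2) := by
        gcongr
        · linarith [add_one_le_exp (2 * δ)]
        · exact sqrt_le_exp_half_sub_one _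
    _ = exp (-2 * γ ^ 2 + 152 * δ) := by rw [← exp_add]; ring_nf

theorem normalizer_pow_le_exp (γ : ℝ) {δ : ℝ} (hδ : 0 ≤ δ) (T : ℕ) :
    ((1 + 2 * δ) * √(1 - 4 * γ ^ 2 + 300 * δ)) ^ T ≤ exp (T * (-2 * γ ^ 2 + 152 * δ)) := by
  rw [exp_nat_mul]
  exact pow_le_pow_left₀ (by positivity) (normalizer_le_exp γ δ) T

theorem rounds_mul_error_le (Q T : ℕ) :
    (T : ℝ) * (152 * (1 / (10 * (Q : ℝ) * (T : ℝ) ^ 2))) ≤ 16 / ((Q : ℝ) * (T : ℝ)) := by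
  -- if `Q T = 0`, both sides are `0` through division by zero
  rcases eq_or_ne ((Q : ℝ) * T) 0 with hQT | hQT
  · rcases mul_eq_zero.1 hQT with h | h <;> simp [h]
  · have hpos : 0 < (Q : ℝ) * T := lt_of_le_of_ne (by positivity) hQT.symm
    rw [show (T : ℝ) * (152 * (1 / (10 * Q * T ^ 2))) = 15.2 / (Q * T) by
      field_simp [(mul_ne_zero_iff.1 hQT).2]; ring]
    gcongr; norm_num

theorem product_normalizer_bound_general (Q T : ℕ)
    (γ : ℝ) :
    ((1 + 2 * (1 / (10 * (Q : ℝ) * (T : ℝ) ^ 2)))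
        * Real.sqrt (1 - 4 * γ ^ 2 + 300 * (1 / (10 * (Q : ℝ) * (T : ℝ) ^ 2)))) ^ T
      ≤ Real.exp (-2 * (T : ℝ) * γ ^ 2 + 16 / ((Q : ℝ) * (T : ℝ))) := by
  calc _ ≤ exp (T * (-2 * γ ^ 2 + 152 * (1 / (10 * (Q : ℝ) * (T : ℝ) ^ 2)))) :=
        normalizer_pow_le_exp γ (by positivity) T
    _ ≤ _ := by
        gcongr
        linarith [rounds_mul_error_le Q T]

/-- Product over T rounds of the modified normalization factors is at most
    exp(-2Tγ² + 16/(QT)), with δ = 1/(10QT²). -/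
theorem product_normalizer_bound (Q T : ℕ) (hQ : 1 ≤ Q) (hT : 1 ≤ T)
    (γ : ℝ) (hγ0 : 0 < γ) (hγ1 : γ ≤ 1 / 2) :
    ((1 + 2 * (1 / (10 * (Q : ℝ) * (T : ℝ) ^ 2)))
        * Real.sqrt (1 - 4 * γ ^ 2 + 300 * (1 / (10 * (Q : ℝ) * (T : ℝ) ^ 2)))) ^ T
      ≤ Real.exp (-2 * (T : ℝ) * γ ^ 2 + 16 / ((Q : ℝ) * (T : ℝ))) :=
  product_normalizer_bound_general Q T γ
end
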